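/- arXiv:2103.13531 — 4 statements merged into one kernel-verified Lean document; each statement's English description precedes it below -/
import Mathlib

section
/- If α : I → ℝ³ is a unit-speed curve with everywhere positive curvature that is a rectifying curve (its position vector always lies in the rectifying plane spanned by the tangent t and binormal b), then there exist constants a ≠ 0 and b such that α(s) = (s + b/a)·t(s) + (1/a)·b(s) for all s. -/
open Real Set
open scoped RealInnerProductSpace

noncomputable section

/-- Euclidean 3-space. -/
abbrev E3 := EuclideanSpace ℝ (Fin 3)

/-- Constructor for points of `E3`. -/
def e3 (x y z : ℝ) : E3 := (WithLp.equiv 2 (Fin 3 → ℝ)).symm ![x, y, z]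

/-- The cross product on `E3`. -/
def cross3 (a b : E3) : E3 :=
  e3 (a 1 * b 2 - a 2 * b 1) (a 2 * b 0 - a 0 * b 2) (a 0 * b 1 - a 1 * b 0)

/-!
Differentiating with the Frenet equations, `⟪α, b⟫' = -τ ⟪α, n⟫ + ⟪t, b⟫ = 0` and
`⟪α, t⟫' = κ ⟪α, n⟫ + ⟪t, t⟫ = 1`, so `⟪α, b⟫ = c` and `⟪α, t⟫ = s + d` for constants `c, d`.
Expanding `α` in the orthonormal frame `(t, n, b)` gives `α = (s + d) t + c b`. If `c = 0`,
differentiating `α = (s + d) t` gives `(s + d) κ n = 0` on an open set, which is impossible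
since `κ > 0`; hence `a = 1 / c` and `b = d / c` work.
-/

open Filter Topology

lemma inner_cross3_left (a b : E3) : ⟪cross3 a b, a⟫ = 0 := by
  simp [cross3, e3, PiLp.inner_apply, Fin.sum_univ_three]; ring

lemma inner_cross3_right (a b : E3) : ⟪cross3 a b, b⟫ = 0 := by
  simp [cross3, e3, PiLp.inner_apply, Fin.sum_univ_three]; ring

lemma norm_cross3_sq (a b : E3) : ‖cross3 a b‖ ^ 2 = ‖a‖ ^ 2 * ‖b‖ ^ 2 - ⟪a, b⟫ ^ 2 := by
  simp only [← real_inner_self_eq_norm_sq]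
  simp [cross3, e3, PiLp.inner_apply, Fin.sum_univ_three, -inner_self_eq_norm_sq_to_K]; ring

lemma orthonormal_cross3 {t n : E3} (ht : ‖t‖ = 1) (hn : ‖n‖ = 1) (htn : ⟪t, n⟫ = 0) :
    Orthonormal ℝ ![t, n, cross3 t n] := by
  have hb : ‖cross3 t n‖ = 1 := by
    rw [← pow_eq_one_iff_of_nonneg (norm_nonneg _) two_ne_zero, norm_cross3_sq, ht, hn, htn]
    norm_num
  rw [orthonormal_iff_ite]
  intro i j
  fin_cases i <;> fin_cases j <;>
    simp [ht, hn, hb, htn, real_inner_comm t n, inner_cross3_left, inner_cross3_right,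
      real_inner_comm (cross3 t n)]

theorem Orthonormal.sum_inner_smul_eq {𝕜 E ι : Type*} [RCLike 𝕜] [NormedAddCommGroup E]
    [InnerProductSpace 𝕜 E] [FiniteDimensional 𝕜 E] [Fintype ι] {v : ι → E}
    (hv : Orthonormal 𝕜 v) (hcard : Fintype.card ι = Module.finrank 𝕜 E) (x : E) :
    ∑ i, inner 𝕜 (v i) x • v i = x := by
  simpa using (OrthonormalBasis.mk hv
    (hv.linearIndependent.span_eq_top_of_card_eq_finrank' hcard).ge).sum_repr' x

lemma eq_inner_smul_add_inner_smul_of_orthonormal {t n b x : E3}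
    (h : Orthonormal ℝ ![t, n, b]) (hxn : ⟪x, n⟫ = 0) : x = ⟪x, t⟫ • t + ⟪x, b⟫ • b := by
  have hexpand := h.sum_inner_smul_eq (by simp) x
  simp only [Fin.sum_univ_three, Matrix.cons_val] at hexpand
  rw [real_inner_comm x t, real_inner_comm x n, real_inner_comm x b, hxn, zero_smul,
    add_zero] at hexpand
  exact hexpand.symm

theorem HasDerivAt.inner_eq_zero_of_eventually_norm_eq {F : Type*} [NormedAddCommGroup F]
    [InnerProductSpace ℝ F] {f : ℝ → F} {f' : F} {x c : ℝ} (hf : HasDerivAt f f' x)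
    (hc : ∀ᶠ y in 𝓝 x, ‖f y‖ = c) : ⟪f x, f'⟫ = 0 := by
  have hconst : HasDerivAt (‖f ·‖ ^ 2) 0 x :=
    (hasDerivAt_const x (c ^ 2)).congr_of_eventuallyEq (hc.mono fun y hy => by simp [hy])
  simpa using hf.norm_sq.unique hconst

theorem IsOpen.exists_eq_of_hasDerivAt_zero {𝕜 G : Type*} [RCLike 𝕜] [NormedAddCommGroup G]
    [NormedSpace 𝕜 G] {s : Set 𝕜} (hs : IsOpen s) (hs' : IsPreconnected s) {f : 𝕜 → G}
    (hf : ∀ x ∈ s, HasDerivAt f 0 x) : ∃ a, ∀ x ∈ s, f x = a :=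
  hs.exists_is_const_of_deriv_eq_zero hs'
    (fun x hx => (hf x hx).differentiableAt.differentiableWithinAt) fun x hx => (hf x hx).deriv

theorem IsOpen.exists_mem_ne {s : Set ℝ} (hs : IsOpen s) (hne : s.Nonempty) (a : ℝ) :
    ∃ x ∈ s, x ≠ a := by
  by_contra! h
  exact not_isOpen_singleton a ((hne.subset_singleton_iff.mp h) ▸ hs)

theorem smul_deriv_eq_zero_of_eventuallyEq_radial {F : Type*} [NormedAddCommGroup F]
    [NormedSpace ℝ F] {α T : ℝ → F} {T' : F} {s d : ℝ}
    (hα : HasDerivAt α (T s) s) (hT : HasDerivAt T T' s)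
    (hrad : α =ᶠ[𝓝 s] fun u => (u + d) • T u) : (s + d) • T' = 0 := by
  have h := hα.unique ((((hasDerivAt_id s).add_const d).smul hT).congr_of_eventuallyEq hrad)
  simpa using h

theorem rectifying_form_general (I : Set ℝ) (hIo : IsOpen I) (hIc : Convex ℝ I)
    (α T N B : ℝ → E3) (κ τ : ℝ → ℝ)
    (hα : ∀ s ∈ I, HasDerivAt α (T s) s)
    (hT : ∀ s ∈ I, HasDerivAt T (κ s • N s) s)
    (hB : ∀ s ∈ I, HasDerivAt B ((-τ s) • N s) s)
    (hTu : ∀ s ∈ I, ‖T s‖ = 1)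
    (hNu : ∀ s ∈ I, ‖N s‖ = 1)
    (hBdef : ∀ s ∈ I, B s = cross3 (T s) (N s))
    (hκ : ∀ s ∈ I, 0 < κ s)
    (hrect : ∀ s ∈ I, ⟪α s, N s⟫ = 0) :
    ∃ a b : ℝ, a ≠ 0 ∧ ∀ s ∈ I, α s = (s + b / a) • T s + (1 / a) • B s := by
  rcases I.eq_empty_or_nonempty with rfl | hne
  · exact ⟨1, 0, one_ne_zero, by simp⟩
  have hTN (s) (hs : s ∈ I) : ⟪T s, N s⟫ = 0 := by
    simpa [real_inner_smul_right, (hκ s hs).ne'] using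
      (hT s hs).inner_eq_zero_of_eventually_norm_eq (eventually_of_mem (hIo.mem_nhds hs) hTu)
  have hframe (s) (hs : s ∈ I) : Orthonormal ℝ ![T s, N s, B s] :=
    hBdef s hs ▸ orthonormal_cross3 (hTu s hs) (hNu s hs) (hTN s hs)
  have hTB (s) (hs : s ∈ I) : ⟪T s, B s⟫ = 0 := by
    simpa using (hframe s hs).inner_eq_zero (i := 0) (j := 2) (by decide)
  obtain ⟨c, hc⟩ := hIo.exists_eq_of_hasDerivAt_zero hIc.isPreconnected
      (f := fun u => ⟪α u, B u⟫) fun s hs => by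
    simpa [real_inner_smul_right, hrect s hs, hTB s hs] using (hα s hs).inner ℝ (hB s hs)
  obtain ⟨d, hd⟩ := hIo.exists_eq_of_hasDerivAt_zero hIc.isPreconnected
      (f := fun u => ⟪α u, T u⟫ - u) fun s hs => by
    simpa [Pi.sub_def, real_inner_smul_right, hrect s hs, hTu s hs]
      using ((hα s hs).inner ℝ (hT s hs)).sub (hasDerivAt_id' s)
  have hform (s) (hs : s ∈ I) : α s = (s + d) • T s + c • B s := by
    rw [eq_inner_smul_add_inner_smul_of_orthonormal (hframe s hs) (hrect s hs), hc s hs, ← hd s hs,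
      add_sub_cancel]
  have hc0 : c ≠ 0 := by
    rintro rfl
    obtain ⟨s, hs, hsd⟩ := hIo.exists_mem_ne hne (-d)
    have hradial := smul_deriv_eq_zero_of_eventuallyEq_radial (hα s hs) (hT s hs)
      (eventually_of_mem (hIo.mem_nhds hs) fun u hu => by simpa using hform u hu)
    have hN0 : N s ≠ 0 := norm_ne_zero_iff.mp (by simp [hNu s hs])
    simp [hN0, (hκ s hs).ne', add_eq_zero_iff_eq_neg, hsd] at hradial
  refine ⟨1 / c, d / c, by simpa using hc0, fun s hs => ?_⟩
  rw [hform s hs]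
  field_simp

/-- A unit-speed rectifying curve with positive curvature has the form
`α(s) = (s + b/a) • t(s) + (1/a) • b(s)`. -/
theorem rectifying_form (I : Set ℝ) (hIo : IsOpen I) (hIc : Convex ℝ I)
    (α T N B : ℝ → E3) (κ τ : ℝ → ℝ)
    (hα : ∀ s ∈ I, HasDerivAt α (T s) s)
    (hT : ∀ s ∈ I, HasDerivAt T (κ s • N s) s)
    (hN : ∀ s ∈ I, HasDerivAt N ((-κ s) • T s + τ s • B s) s)
    (hB : ∀ s ∈ I, HasDerivAt B ((-τ s) • N s) s)
    (hTu : ∀ s ∈ I, ‖T s‖ = 1)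
    (hNu : ∀ s ∈ I, ‖N s‖ = 1)
    (hBdef : ∀ s ∈ I, B s = cross3 (T s) (N s))
    (hκ : ∀ s ∈ I, 0 < κ s)
    (hrect : ∀ s ∈ I, ⟪α s, N s⟫ = 0) :
    ∃ a b : ℝ, a ≠ 0 ∧ ∀ s ∈ I, α s = (s + b / a) • T s + (1 / a) • B s :=
  rectifying_form_general I hIo hIc α T N B κ τ hα hT hB hTu hNu hBdef hκ hrect
end
end

section
/- Let α(s) = (1/a)·√(1 + (as + b)²) · y(c + arctan(as + b)) with a > 0 and y a unit-speed curve on the unit sphere. Then α is unit speed, has positive curvature at points where defined, and satisfies α(s) × α'(s) = (1/a)·(y × y')(t(s)); consequently the principal normal n of α is parallel to the surface normal N of the cone X(t,u) = u·y(t) along α, i.e., α is a geodesic of the cone. -/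
open Real Set
open scoped RealInnerProductSpace

noncomputable section

/-!
Put `w = a s + b`, `ρ = √(1 + w²)` and `θ = c + arctan w`, so that `α(s) = a⁻¹ P(w)` with
`P(w) = ρ y(θ)`. Since `θ' = ρ⁻²`, we get `α'(s) = P'(w) = (w/ρ) y(θ) + ρ⁻¹ y'(θ)` and
`α''(s) = a P''(w) = (a/ρ³) (y''(θ) + y(θ))`. As `y(θ), y'(θ)` are orthonormal, `α'` is a unit
vector and `α × α' = a⁻¹ y × y'`. Differentiating `⟪y, y⟫ = ⟪y', y'⟫ = 1` and `⟪y, y'⟫ = 0` shows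
that `y'' + y` is orthogonal to both `y` and `y'`, hence a multiple of the cone normal `y' × y`.
-/

lemma cross3_cross3 (u v w : E3) : cross3 u (cross3 v w) = ⟪u, w⟫ • v - ⟪u, v⟫ • w := by
  ext i
  fin_cases i <;>
  · simp [cross3, e3, PiLp.inner_apply, Fin.sum_univ_three]
    ring

lemma cross3_anticomm (u v : E3) : cross3 u v = -cross3 v u := by
  ext i
  fin_cases i <;>
  · simp [cross3, e3]
    ring

lemma cross3_self (u : E3) : cross3 u u = 0 := by
  ext i
  fin_cases i <;>
  · simp [cross3, e3]
    ring

lemma cross3_zero_right (u : E3) : cross3 u 0 = 0 := by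
  ext i
  fin_cases i <;> simp [cross3, e3]

lemma cross3_add_right (u v w : E3) : cross3 u (v + w) = cross3 u v + cross3 u w := by
  ext i
  fin_cases i <;>
  · simp [cross3, e3]
    ring

lemma cross3_smul_left (r : ℝ) (u v : E3) : cross3 (r • u) v = r • cross3 u v := by
  ext i
  fin_cases i <;>
  · simp [cross3, e3]
    ring

lemma cross3_smul_right (r : ℝ) (u v : E3) : cross3 u (r • v) = r • cross3 u v := by
  ext i
  fin_cases i <;>
  · simp [cross3, e3]
    ring

lemma inner_cross3_self (u v : E3) :
    ⟪cross3 u v, cross3 u v⟫ = ⟪u, u⟫ * ⟪v, v⟫ - ⟪u, v⟫ ^ 2 := by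
  simp only [PiLp.inner_apply]
  simp [cross3, e3, Fin.sum_univ_three]
  ring

lemma eq_inner_smul_cross3_of_orthonormal {u v x : E3} (hu : ‖u‖ = 1) (hv : ‖v‖ = 1)
    (huv : ⟪u, v⟫ = 0) (hxu : ⟪x, u⟫ = 0) (hxv : ⟪x, v⟫ = 0) :
    x = ⟪cross3 v u, x⟫ • cross3 v u := by
  set n := cross3 v u
  have hn : ⟪n, n⟫ = 1 := by
    rw [inner_cross3_self, real_inner_self_eq_norm_sq, real_inner_self_eq_norm_sq, hu, hv,
      real_inner_comm, huv]
    ring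
  have hxn : cross3 n x = 0 := by
    rw [cross3_anticomm, cross3_cross3, hxu, hxv, zero_smul, zero_smul, sub_zero, neg_zero]
  have := cross3_cross3 n n x
  rw [hxn, cross3_zero_right, hn, one_smul, eq_comm, sub_eq_zero] at this
  exact this.symm

lemma exists_eq_smul_cross3_of_orthonormal {u v x : E3} (hu : ‖u‖ = 1) (hv : ‖v‖ = 1)
    (huv : ⟪u, v⟫ = 0) (hxu : ⟪x, u⟫ = 0) (hxv : ⟪x, v⟫ = 0) (hx : x ≠ 0) :
    ∃ k : ℝ, k ≠ 0 ∧ x = k • cross3 v u := by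
  have hspan := eq_inner_smul_cross3_of_orthonormal hu hv huv hxu hxv
  refine ⟨_, fun hk => hx ?_, hspan⟩
  rw [hspan, hk, zero_smul]

section SphereCurve

variable {F : Type*} [NormedAddCommGroup F] [InnerProductSpace ℝ F]

lemma inner_add_inner_eq_zero_of_inner_eq_const {f g f' g' : ℝ → F} {C : ℝ}
    (hf : ∀ τ, HasDerivAt f (f' τ) τ) (hg : ∀ τ, HasDerivAt g (g' τ) τ)
    (hfg : ∀ τ, ⟪f τ, g τ⟫ = C) (τ : ℝ) : ⟪f τ, g' τ⟫ + ⟪f' τ, g τ⟫ = 0 := by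
  have hconst : (fun τ => ⟪f τ, g τ⟫) = fun _ => C := funext hfg
  have := (hf τ).inner ℝ (hg τ)
  rw [hconst] at this
  exact this.unique (hasDerivAt_const τ C)

variable {y yd ydd : ℝ → F}

lemma inner_eq_zero_of_norm_eq_const {R : ℝ} (hy : ∀ τ, HasDerivAt y (yd τ) τ)
    (hyR : ∀ τ, ‖y τ‖ = R) (τ : ℝ) : ⟪y τ, yd τ⟫ = 0 := by
  have := inner_add_inner_eq_zero_of_inner_eq_const hy hy (C := R ^ 2)
    (fun τ => by rw [real_inner_self_eq_norm_sq, hyR]) τ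
  rw [real_inner_comm (y τ)] at this
  linarith

lemma inner_snd_deriv_add_eq_zero_of_unit_speed (hy : ∀ τ, HasDerivAt y (yd τ) τ)
    (hyd : ∀ τ, HasDerivAt yd (ydd τ) τ) (hyu : ∀ τ, ‖y τ‖ = 1) (hydu : ∀ τ, ‖yd τ‖ = 1)
    (τ : ℝ) : ⟪ydd τ + y τ, y τ⟫ = 0 ∧ ⟪ydd τ + y τ, yd τ⟫ = 0 := by
  have hyyd := inner_eq_zero_of_norm_eq_const hy hyu
  have hydydd := inner_eq_zero_of_norm_eq_const hyd hydu τ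
  have hyydd := inner_add_inner_eq_zero_of_inner_eq_const hy hyd hyyd τ
  rw [real_inner_self_eq_norm_sq, hydu] at hyydd
  constructor
  · rw [inner_add_left, real_inner_comm, real_inner_self_eq_norm_sq, hyu]
    linarith
  · rw [inner_add_left, real_inner_comm, hydydd, hyyd]
    ring

end SphereCurve

section Profile

variable {F : Type*} [NormedAddCommGroup F] [NormedSpace ℝ F]

def coneProfile (y : ℝ → F) (c w : ℝ) : F := √(1 + w ^ 2) • y (c + arctan w)

def coneProfileDeriv (y yd : ℝ → F) (c w : ℝ) : F :=
  (w / √(1 + w ^ 2)) • y (c + arctan w) + (√(1 + w ^ 2))⁻¹ • yd (c + arctan w)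

lemma sqrt_one_add_sq_pos (w : ℝ) : 0 < √(1 + w ^ 2) := by positivity

lemma hasDerivAt_sqrt_one_add_sq (w : ℝ) :
    HasDerivAt (fun w => √(1 + w ^ 2)) (w / √(1 + w ^ 2)) w := by
  have := ((hasDerivAt_pow 2 w).const_add 1).sqrt (by positivity)
  convert this using 1
  field_simp
  ring

lemma hasDerivAt_const_add_arctan (c w : ℝ) :
    HasDerivAt (fun w => c + arctan w) ((√(1 + w ^ 2) ^ 2)⁻¹) w := by
  rw [sq_sqrt (by positivity), ← one_div]
  exact (hasDerivAt_arctan w).const_add c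

variable {y yd ydd : ℝ → F} (c : ℝ)

lemma hasDerivAt_coneProfile (hy : ∀ τ, HasDerivAt y (yd τ) τ) (w : ℝ) :
    HasDerivAt (coneProfile y c) (coneProfileDeriv y yd c w) w := by
  refine ((hasDerivAt_sqrt_one_add_sq w).smul
    ((hy _).scomp w (hasDerivAt_const_add_arctan c w))).congr_deriv ?_
  have hρ0 := (sqrt_one_add_sq_pos w).ne'
  rw [coneProfileDeriv, smul_smul, add_comm]
  congr 2
  field_simp

lemma hasDerivAt_coneProfileDeriv (hy : ∀ τ, HasDerivAt y (yd τ) τ)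
    (hyd : ∀ τ, HasDerivAt yd (ydd τ) τ) (w : ℝ) :
    HasDerivAt (coneProfileDeriv y yd c)
      ((√(1 + w ^ 2) ^ 3)⁻¹ • (ydd (c + arctan w) + y (c + arctan w))) w := by
  have hρ := hasDerivAt_sqrt_one_add_sq w
  have hθ := hasDerivAt_const_add_arctan c w
  have hρ0 := (sqrt_one_add_sq_pos w).ne'
  refine ((((hasDerivAt_id w).div hρ hρ0).smul ((hy _).scomp w hθ)).add
    ((hρ.inv hρ0).smul ((hyd _).scomp w hθ))).congr_deriv ?_
  have hρ2 : √(1 + w ^ 2) ^ 2 = 1 + w ^ 2 := sq_sqrt (by positivity)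
  have hcoeff : (1 * √(1 + w ^ 2) - w * (w / √(1 + w ^ 2))) / √(1 + w ^ 2) ^ 2
      = (√(1 + w ^ 2) ^ 3)⁻¹ := by
    field_simp
    linear_combination hρ2
  simp only [Pi.div_apply, Pi.inv_apply, id, Function.comp_apply, hcoeff]
  module

end Profile

lemma norm_coneProfileDeriv {F : Type*} [NormedAddCommGroup F] [InnerProductSpace ℝ F]
    {y yd : ℝ → F} {c w : ℝ} (hy : ‖y (c + arctan w)‖ = 1) (hyd : ‖yd (c + arctan w)‖ = 1)
    (hyyd : ⟪y (c + arctan w), yd (c + arctan w)⟫ = 0) :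
    ‖coneProfileDeriv y yd c w‖ = 1 := by
  have hρ2 : √(1 + w ^ 2) ^ 2 = 1 + w ^ 2 := sq_sqrt (by positivity)
  have hρ0 := (sqrt_one_add_sq_pos w).ne'
  have hsq : ‖coneProfileDeriv y yd c w‖ ^ 2 = 1 := by
    rw [sq, coneProfileDeriv, norm_add_sq_eq_norm_sq_add_norm_sq_real
      (by rw [real_inner_smul_left, real_inner_smul_right, hyyd, mul_zero, mul_zero]),
      norm_smul, norm_smul, hy, hyd, mul_one, mul_one, Real.norm_eq_abs, Real.norm_eq_abs,
      abs_mul_abs_self, abs_mul_abs_self]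
    field_simp
    linear_combination -hρ2
  exact (pow_eq_one_iff_of_nonneg (norm_nonneg _) two_ne_zero).mp hsq

lemma cross3_coneProfile_coneProfileDeriv (y yd : ℝ → E3) (c w : ℝ) :
    cross3 (coneProfile y c w) (coneProfileDeriv y yd c w)
      = cross3 (y (c + arctan w)) (yd (c + arctan w)) := by
  have hρ0 := (sqrt_one_add_sq_pos w).ne'
  rw [coneProfile, coneProfileDeriv, cross3_smul_left, cross3_add_right, cross3_smul_right,
    cross3_smul_right, cross3_self, smul_zero, zero_add, smul_smul, mul_inv_cancel₀ hρ0, one_smul]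

lemma HasDerivAt.comp_mul_add {F : Type*} [NormedAddCommGroup F] [NormedSpace ℝ F]
    {g : ℝ → F} {g' : F} {a b s : ℝ} (hg : HasDerivAt g g' (a * s + b)) :
    HasDerivAt (fun s => g (a * s + b)) (a • g') s := by
  have hlin : HasDerivAt (fun s => a * s + b) a s := by
    simpa using ((hasDerivAt_id s).const_mul a).add_const b
  exact hg.scomp s hlin

lemma HasDerivAt.inv_smul_comp_mul_add {F : Type*} [NormedAddCommGroup F] [NormedSpace ℝ F]
    {g : ℝ → F} {g' : F} {a b s : ℝ} (ha : a ≠ 0) (hg : HasDerivAt g g' (a * s + b)) :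
    HasDerivAt (fun s => a⁻¹ • g (a * s + b)) g' s := by
  have := hg.comp_mul_add.const_smul a⁻¹
  rwa [smul_smul, inv_mul_cancel₀ ha, one_smul] at this

theorem cone_rectifying_is_geodesic_general (I : Set ℝ)
    (y yd ydd : ℝ → E3)
    (hy : ∀ τ : ℝ, HasDerivAt y (yd τ) τ)
    (hyd : ∀ τ : ℝ, HasDerivAt yd (ydd τ) τ)
    (hyu : ∀ τ : ℝ, ‖y τ‖ = 1) (hydu : ∀ τ : ℝ, ‖yd τ‖ = 1)
    (hng : ∀ τ : ℝ, ydd τ + y τ ≠ 0)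
    (a b c : ℝ) (ha : 0 < a)
    (α : ℝ → E3)
    (hα : ∀ s : ℝ, α s = ((1 / a) * Real.sqrt (1 + (a * s + b) ^ 2)) •
      y (c + Real.arctan (a * s + b))) :
    ∀ s ∈ I,
      ‖deriv α s‖ = 1 ∧
      cross3 (α s) (deriv α s)
        = (1 / a) • cross3 (y (c + Real.arctan (a * s + b))) (yd (c + Real.arctan (a * s + b))) ∧
      deriv (deriv α) s ≠ 0 ∧
      ∃ k : ℝ, k ≠ 0 ∧ deriv (deriv α) s
        = k • cross3 (yd (c + Real.arctan (a * s + b))) (y (c + Real.arctan (a * s + b))) := by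
  intro s _
  have hα' : α = fun s => a⁻¹ • coneProfile y c (a * s + b) :=
    funext fun s => by rw [hα, coneProfile, smul_smul, one_div]
  have hd1 : deriv α = fun s => coneProfileDeriv y yd c (a * s + b) := funext fun s => by
    rw [hα']
    exact ((hasDerivAt_coneProfile c hy _).inv_smul_comp_mul_add ha.ne').deriv
  set θ := c + arctan (a * s + b)
  set ρ := √(1 + (a * s + b) ^ 2)
  have hd2 : deriv (deriv α) s = a • (ρ ^ 3)⁻¹ • (ydd θ + y θ) := by
    rw [hd1]
    exact (hasDerivAt_coneProfileDeriv c hy hyd _).comp_mul_add.deriv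
  have hyyd := inner_eq_zero_of_norm_eq_const hy hyu θ
  have hρ3 : (ρ ^ 3)⁻¹ ≠ 0 := inv_ne_zero (pow_pos (sqrt_one_add_sq_pos _) 3).ne'
  refine ⟨?_, ?_, ?_, ?_⟩
  · rw [hd1]
    exact norm_coneProfileDeriv (hyu θ) (hydu θ) hyyd
  · rw [congrFun hα' s, hd1, cross3_smul_left, cross3_coneProfile_coneProfileDeriv, one_div]
  · rw [hd2]
    exact smul_ne_zero ha.ne' (smul_ne_zero hρ3 (hng θ))
  · obtain ⟨hnu, hnv⟩ := inner_snd_deriv_add_eq_zero_of_unit_speed hy hyd hyu hydu θ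
    obtain ⟨k, hk, hn⟩ :=
      exists_eq_smul_cross3_of_orthonormal (hyu θ) (hydu θ) hyyd hnu hnv (hng θ)
    refine ⟨a * (ρ ^ 3)⁻¹ * k, mul_ne_zero (mul_ne_zero ha.ne' hρ3) hk, ?_⟩
    rw [hd2, hn, smul_smul, smul_smul]

/-- The curve `α(s) = (1/a)√(1+(as+b)²) • y(c + arctan(as+b))` over a unit-speed
spherical curve `y` (spanning a nondegenerate cone, i.e. `y'' + y ≠ 0`) is unit
speed, has nonvanishing curvature, satisfies `α × α' = (1/a) • (y × y')`, and its
principal normal `α''/‖α''‖` is parallel to the surface normal `y' × y` of the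
cone `X(t,u) = u • y(t)`: it is a geodesic of the cone. -/
theorem cone_rectifying_is_geodesic (I : Set ℝ) (hIo : IsOpen I) (hIc : Convex ℝ I)
    (y yd ydd : ℝ → E3)
    (hy : ∀ τ : ℝ, HasDerivAt y (yd τ) τ)
    (hyd : ∀ τ : ℝ, HasDerivAt yd (ydd τ) τ)
    (hyu : ∀ τ : ℝ, ‖y τ‖ = 1) (hydu : ∀ τ : ℝ, ‖yd τ‖ = 1)
    (hng : ∀ τ : ℝ, ydd τ + y τ ≠ 0)
    (a b c : ℝ) (ha : 0 < a)
    (α : ℝ → E3)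
    (hα : ∀ s : ℝ, α s = ((1 / a) * Real.sqrt (1 + (a * s + b) ^ 2)) •
      y (c + Real.arctan (a * s + b))) :
    ∀ s ∈ I,
      ‖deriv α s‖ = 1 ∧
      cross3 (α s) (deriv α s)
        = (1 / a) • cross3 (y (c + Real.arctan (a * s + b))) (yd (c + Real.arctan (a * s + b))) ∧
      deriv (deriv α) s ≠ 0 ∧
      ∃ k : ℝ, k ≠ 0 ∧ deriv (deriv α) s
        = k • cross3 (yd (c + Real.arctan (a * s + b))) (y (c + Real.arctan (a * s + b))) :=
  cone_rectifying_is_geodesic_general I y yd ydd hy hyd hyu hydu hng a b c ha α hα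
end
end

section
/- If α is a geodesic with positive curvature on a cone with vertex at the origin, then α is not a planar curve (its torsion is not identically zero). -/
open Real Set
open scoped RealInnerProductSpace

noncomputable section

/-!
On the cone `α = u • y` and the principal normal is `± y' × y`, so `⟪α, N⟫ = 0`.
If the torsion vanished, differentiating this would give `-κ ⟪α, T⟫ + ⟪T, N⟫ = -κ ⟪α, T⟫ = 0`,
so `⟪α, T⟫ = 0`; differentiating once more gives `κ ⟪α, N⟫ + ‖T‖² = 1 = 0`.
-/

lemma inner_cross3_self_s12 (v w : E3) : ⟪w, cross3 v w⟫ = 0 := by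
  simp [cross3, e3, PiLp.inner_apply, Fin.sum_univ_three, WithLp.equiv_symm_apply]
  ring

lemma HasDerivAt.eq_zero_of_eqOn_const {F : Type*} [NormedAddCommGroup F] [NormedSpace ℝ F]
    {f : ℝ → F} {f' c : F} {I : Set ℝ} (hI : IsOpen I) {s : ℝ} (hs : s ∈ I)
    (hc : ∀ x ∈ I, f x = c) (hf : HasDerivAt f f' s) : f' = 0 :=
  hf.unique <| (hasDerivAt_const s c).congr_of_eventuallyEq <|
    Filter.eventually_of_mem (hI.mem_nhds hs) hc

section InnerProductSpace

variable {F : Type*} [NormedAddCommGroup F] [InnerProductSpace ℝ F]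

lemma inner_hasDerivAt_eq_zero_of_norm_eq_one {T : ℝ → F} {T' : F} {I : Set ℝ}
    (hI : IsOpen I) {s : ℝ} (hs : s ∈ I) (hTu : ∀ x ∈ I, ‖T x‖ = 1)
    (hT : HasDerivAt T T' s) : ⟪T s, T'⟫ = 0 := by
  have h := hT.norm_sq.eq_zero_of_eqOn_const hI hs (c := 1) fun x hx => by simp [hTu x hx]
  simpa using h

theorem not_forall_inner_normal_eq_zero_of_torsion_zero {I : Set ℝ} (hI : IsOpen I)
    (hne : I.Nonempty) {α T N : ℝ → F} {κ : ℝ → ℝ}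
    (hα : ∀ s ∈ I, HasDerivAt α (T s) s)
    (hT : ∀ s ∈ I, HasDerivAt T (κ s • N s) s)
    (hN : ∀ s ∈ I, HasDerivAt N ((-κ s) • T s) s)
    (hTu : ∀ s ∈ I, ‖T s‖ = 1) (hκ : ∀ s ∈ I, κ s ≠ 0) :
    ¬ ∀ s ∈ I, ⟪α s, N s⟫ = 0 := by
  intro hαN
  have hTN : ∀ s ∈ I, ⟪T s, N s⟫ = 0 := fun s hs => by
    have h := inner_hasDerivAt_eq_zero_of_norm_eq_one hI hs hTu (hT s hs)
    rw [real_inner_smul_right] at h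
    exact (mul_eq_zero.mp h).resolve_left (hκ s hs)
  have hαT : ∀ s ∈ I, ⟪α s, T s⟫ = 0 := fun s hs => by
    have h := ((hα s hs).inner ℝ (hN s hs)).eq_zero_of_eqOn_const hI hs hαN
    rw [real_inner_smul_right, hTN s hs, add_zero] at h
    exact (mul_eq_zero.mp h).resolve_left (neg_ne_zero.mpr (hκ s hs))
  obtain ⟨s, hs⟩ := hne
  have h := ((hα s hs).inner ℝ (hT s hs)).eq_zero_of_eqOn_const hI hs hαT
  rw [real_inner_smul_right, hαN s hs, real_inner_self_eq_norm_sq, hTu s hs] at h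
  norm_num at h

end InnerProductSpace

theorem cone_geodesic_not_planar_general (I : Set ℝ) (hIo : IsOpen I)
    (α T N B : ℝ → E3) (κ τ : ℝ → ℝ)
    (hα : ∀ s ∈ I, HasDerivAt α (T s) s)
    (hT : ∀ s ∈ I, HasDerivAt T (κ s • N s) s)
    (hN : ∀ s ∈ I, HasDerivAt N ((-κ s) • T s + τ s • B s) s)
    (hTu : ∀ s ∈ I, ‖T s‖ = 1)
    (hκ : ∀ s ∈ I, 0 < κ s)
    (hne : I.Nonempty)
    (hgeo : (∃ (y : ℝ → E3) (u t : ℝ → ℝ), ∀ s ∈ I,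
        ‖y (t s)‖ = 1 ∧
        HasDerivAt y (deriv y (t s)) (t s) ∧
        ‖deriv y (t s)‖ = 1 ∧
        0 < u s ∧
        α s = u s • y (t s) ∧
        (N s = cross3 (deriv y (t s)) (y (t s)) ∨
         N s = -cross3 (deriv y (t s)) (y (t s))))) :
    ¬ (∀ s ∈ I, τ s = 0) := by
  intro hτ
  obtain ⟨y, u, t, hcone⟩ := hgeo
  have hαN : ∀ s ∈ I, ⟪α s, N s⟫ = 0 := fun s hs => by
    obtain ⟨-, -, -, -, hαs, hNs⟩ := hcone s hs
    rcases hNs with hNs | hNs <;>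
      simp [hαs, hNs, real_inner_smul_left, inner_cross3_self_s12]
  have hN' : ∀ s ∈ I, HasDerivAt N ((-κ s) • T s) s := fun s hs => by
    simpa [hτ s hs] using hN s hs
  exact not_forall_inner_normal_eq_zero_of_torsion_zero hIo hne hα hT hN' hTu
    (fun s hs => (hκ s hs).ne') hαN

/-- A geodesic with positive curvature on a cone with vertex at the origin is not
planar: its torsion is not identically zero. -/
theorem cone_geodesic_not_planar (I : Set ℝ) (hIo : IsOpen I) (hIc : Convex ℝ I)
    (α T N B : ℝ → E3) (κ τ : ℝ → ℝ)
    (hα : ∀ s ∈ I, HasDerivAt α (T s) s)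
    (hT : ∀ s ∈ I, HasDerivAt T (κ s • N s) s)
    (hN : ∀ s ∈ I, HasDerivAt N ((-κ s) • T s + τ s • B s) s)
    (hB : ∀ s ∈ I, HasDerivAt B ((-τ s) • N s) s)
    (hTu : ∀ s ∈ I, ‖T s‖ = 1)
    (hNu : ∀ s ∈ I, ‖N s‖ = 1)
    (hBdef : ∀ s ∈ I, B s = cross3 (T s) (N s))
    (hκ : ∀ s ∈ I, 0 < κ s)
    (hne : I.Nonempty)
    (hgeo : (∃ (y : ℝ → E3) (u t : ℝ → ℝ), ∀ s ∈ I,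
        ‖y (t s)‖ = 1 ∧
        HasDerivAt y (deriv y (t s)) (t s) ∧
        ‖deriv y (t s)‖ = 1 ∧
        0 < u s ∧
        α s = u s • y (t s) ∧
        (N s = cross3 (deriv y (t s)) (y (t s)) ∨
         N s = -cross3 (deriv y (t s)) (y (t s))))) :
    ¬ (∀ s ∈ I, τ s = 0) :=
  cone_geodesic_not_planar_general I hIo α T N B κ τ hα hT hN hTu hκ hne hgeo
end
end

section
/- Let α be a unit-speed rectifying curve with κ > 0, written α(s) = (1/a)√(1+(as+b)²)·y(t(s)) with y the unit-speed spherical projection. For any fixed unit vector U, the identity ((1+(as+b)²)^{3/2}/a) · d/ds⟨y(t(s)), U⟩ = -(1/κ(s)) · d/ds⟨n(s), U⟩ holds. Consequently, ⟨y(t(s)), U⟩ is constant if and only if ⟨n(s), U⟩ is constant. -/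
open Real Set
open scoped RealInnerProductSpace

noncomputable section

/-!
Put `φ(s) = a s + b` and `ρ = √(1 + φ²)`. The rectifying form gives `y = (φ T + B) / ρ`, and
differentiating shows `y' = (a / ρ³) (T - φ B)`, while `τ = κ φ` turns the Frenet equation into
`N' = -κ (T - φ B)`. So `y'` and `N'` are nonzero multiples of the same vector, and pairing with
`U` gives the identity; moreover each of `⟨y, U⟩`, `⟨N, U⟩` is constant exactly when
`⟨T - φ B, U⟩` vanishes identically.
-/

theorem exists_eq_const_iff_forall_eq_zero_of_hasDerivAt_mul {I : Set ℝ} (hIo : IsOpen I)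
    (hIc : IsPreconnected I) {u p g : ℝ → ℝ} (hu : ∀ s ∈ I, HasDerivAt u (p s * g s) s)
    (hp : ∀ s ∈ I, p s ≠ 0) :
    (∃ k, ∀ s ∈ I, u s = k) ↔ ∀ s ∈ I, g s = 0 := by
  constructor
  · rintro ⟨k, hk⟩ s hs
    have hu₀ : HasDerivAt u 0 s :=
      (hasDerivAt_const s k).congr_of_eventuallyEq
        (Filter.eventually_of_mem (hIo.mem_nhds hs) hk)
    exact (mul_eq_zero.1 (hu₀.unique (hu s hs)).symm).resolve_left (hp s hs)
  · intro hg
    refine hIo.exists_is_const_of_deriv_eq_zero hIc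
      (fun s hs => (hu s hs).differentiableAt.differentiableWithinAt) fun s hs => ?_
    simp [(hu s hs).deriv, hg s hs]

theorem hasDerivAt_div_sqrt_one_add_sq (a b s : ℝ) :
    HasDerivAt (fun σ => a / √(1 + (a * σ + b) ^ 2))
      (-(a ^ 2 * (a * s + b)) / √(1 + (a * s + b) ^ 2) ^ 3) s := by
  have hpos : 0 < 1 + (a * s + b) ^ 2 := by positivity
  have hρ := Real.sqrt_pos.2 hpos
  have hφ : HasDerivAt (fun σ => 1 + (a * σ + b) ^ 2) (2 * (a * s + b) * a) s := by
    simpa using ((((hasDerivAt_id s).const_mul a).add_const b).pow 2).const_add 1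
  refine ((hasDerivAt_const s a).fun_div (hφ.sqrt hpos.ne') hρ.ne').congr_deriv ?_
  field_simp
  ring

section Rectifying

variable {E : Type*} [NormedAddCommGroup E] [NormedSpace ℝ E]

theorem hasDerivAt_rectifying_projection {α T B : ℝ → E} {a b s : ℝ} (ha : a ≠ 0)
    (hα : HasDerivAt α (T s) s) (hform : α s = (s + b / a) • T s + (1 / a) • B s) :
    HasDerivAt (fun σ => (a / √(1 + (a * σ + b) ^ 2)) • α σ)
      ((a / √(1 + (a * s + b) ^ 2) ^ 3) • (T s - (a * s + b) • B s)) s := by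
  have hpos : 0 < 1 + (a * s + b) ^ 2 := by positivity
  have hρ := Real.sqrt_pos.2 hpos
  have hρ2 : √(1 + (a * s + b) ^ 2) ^ 2 = 1 + (a * s + b) ^ 2 := Real.sq_sqrt hpos.le
  refine ((hasDerivAt_div_sqrt_one_add_sq a b s).fun_smul hα).congr_deriv ?_
  set ρ := √(1 + (a * s + b) ^ 2)
  have hT : a / ρ + -(a ^ 2 * (a * s + b)) / ρ ^ 3 * (s + b / a) = a / ρ ^ 3 := by
    field_simp
    linear_combination hρ2
  have hB : -(a ^ 2 * (a * s + b)) / ρ ^ 3 * (1 / a) = -(a / ρ ^ 3 * (a * s + b)) := by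
    field_simp
  rw [hform]
  linear_combination (norm := module) hT • T s + hB • B s

theorem hasDerivAt_normal_of_torsion_eq {T N B : ℝ → E} {κ τ : ℝ → ℝ} {a b s : ℝ}
    (hN : HasDerivAt N ((-κ s) • T s + τ s • B s) s) (hτ : τ s = κ s * (a * s + b)) :
    HasDerivAt N ((-κ s) • (T s - (a * s + b) • B s)) s :=
  hN.congr_deriv (by rw [hτ]; module)

end Rectifying

theorem projection_normal_angle_relation_general (I : Set ℝ) (hIo : IsOpen I) (hIc : Convex ℝ I)
    (α T N B : ℝ → E3) (κ τ : ℝ → ℝ)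
    (hα : ∀ s ∈ I, HasDerivAt α (T s) s)
    (hN : ∀ s ∈ I, HasDerivAt N ((-κ s) • T s + τ s • B s) s)
    (hκ : ∀ s ∈ I, 0 < κ s)
    (a b : ℝ) (ha : 0 < a)
    (hform : ∀ s ∈ I, α s = (s + b / a) • T s + (1 / a) • B s)
    (hτ : ∀ s ∈ I, τ s = κ s * (a * s + b))
    (U : E3) :
    (∀ s ∈ I,
      ((1 + (a * s + b) ^ 2) ^ ((3 : ℝ) / 2) / a) *
          deriv (fun σ : ℝ => ⟪(a / Real.sqrt (1 + (a * σ + b) ^ 2)) • α σ, U⟫) s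
        = -(1 / κ s) * deriv (fun σ : ℝ => ⟪N σ, U⟫) s) ∧
    ((∃ k : ℝ, ∀ s ∈ I, ⟪(a / Real.sqrt (1 + (a * s + b) ^ 2)) • α s, U⟫ = k) ↔
     (∃ k : ℝ, ∀ s ∈ I, ⟪N s, U⟫ = k)) := by
  set g : ℝ → ℝ := fun s => ⟪T s - (a * s + b) • B s, U⟫
  have hρ : ∀ s, 0 < √(1 + (a * s + b) ^ 2) := fun s => Real.sqrt_pos.2 (by positivity)
  have hyU : ∀ s ∈ I, HasDerivAt (fun σ => ⟪(a / √(1 + (a * σ + b) ^ 2)) • α σ, U⟫)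
      (a / √(1 + (a * s + b) ^ 2) ^ 3 * g s) s := fun s hs => by
    simpa [g, real_inner_smul_left] using
      (hasDerivAt_rectifying_projection ha.ne' (hα s hs) (hform s hs)).inner ℝ
        (hasDerivAt_const s U)
  have hNU : ∀ s ∈ I, HasDerivAt (fun σ => ⟪N σ, U⟫) (-κ s * g s) s := fun s hs => by
    simpa [g, real_inner_smul_left] using
      (hasDerivAt_normal_of_torsion_eq (hN s hs) (hτ s hs)).inner ℝ (hasDerivAt_const s U)
  refine ⟨fun s hs => ?_, ?_⟩
  · have hpow : (1 + (a * s + b) ^ 2) ^ ((3 : ℝ) / 2) = √(1 + (a * s + b) ^ 2) ^ 3 := by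
      rw [Real.rpow_div_two_eq_sqrt _ (by positivity)]
      norm_cast
    rw [(hyU s hs).deriv, (hNU s hs).deriv, hpow]
    have hρs := (hρ s).ne'
    have hκs := (hκ s hs).ne'
    field_simp
  · rw [exists_eq_const_iff_forall_eq_zero_of_hasDerivAt_mul hIo hIc.isPreconnected hyU
        fun s _ => div_ne_zero ha.ne' (pow_ne_zero 3 (hρ s).ne'),
      exists_eq_const_iff_forall_eq_zero_of_hasDerivAt_mul hIo hIc.isPreconnected hNU
        fun s hs => neg_ne_zero.2 (hκ s hs).ne']

/-- For a rectifying curve `α = (s + b/a) t + (1/a) b` with spherical projection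
`y(t(s)) = a α(s)/√(1+(as+b)²)` and any fixed unit vector `U`,
`((1+(as+b)²)^{3/2}/a) (d/ds)⟨y, U⟩ = -(1/κ) (d/ds)⟨n, U⟩`; hence `⟨y, U⟩` is
constant iff `⟨n, U⟩` is constant. -/
theorem projection_normal_angle_relation (I : Set ℝ) (hIo : IsOpen I) (hIc : Convex ℝ I)
    (α T N B : ℝ → E3) (κ τ : ℝ → ℝ)
    (hα : ∀ s ∈ I, HasDerivAt α (T s) s)
    (hT : ∀ s ∈ I, HasDerivAt T (κ s • N s) s)
    (hN : ∀ s ∈ I, HasDerivAt N ((-κ s) • T s + τ s • B s) s)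
    (hB : ∀ s ∈ I, HasDerivAt B ((-τ s) • N s) s)
    (hTu : ∀ s ∈ I, ‖T s‖ = 1)
    (hNu : ∀ s ∈ I, ‖N s‖ = 1)
    (hBdef : ∀ s ∈ I, B s = cross3 (T s) (N s))
    (hκ : ∀ s ∈ I, 0 < κ s)
    (a b : ℝ) (ha : 0 < a)
    (hform : ∀ s ∈ I, α s = (s + b / a) • T s + (1 / a) • B s)
    (hτ : ∀ s ∈ I, τ s = κ s * (a * s + b))
    (U : E3) (hU : ‖U‖ = 1) :
    (∀ s ∈ I,
      ((1 + (a * s + b) ^ 2) ^ ((3 : ℝ) / 2) / a) *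
          deriv (fun σ : ℝ => ⟪(a / Real.sqrt (1 + (a * σ + b) ^ 2)) • α σ, U⟫) s
        = -(1 / κ s) * deriv (fun σ : ℝ => ⟪N σ, U⟫) s) ∧
    ((∃ k : ℝ, ∀ s ∈ I, ⟪(a / Real.sqrt (1 + (a * s + b) ^ 2)) • α s, U⟫ = k) ↔
     (∃ k : ℝ, ∀ s ∈ I, ⟪N s, U⟫ = k)) :=
  projection_normal_angle_relation_general I hIo hIc α T N B κ τ hα hN hκ a b ha hform hτ U
end
end
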